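/- Let μ be a boundedly finite Borel measure on E = [0,∞)² ∖ {(0,0)} that is homogeneous of degree −1 and has standardized marginals, let ‖·‖ be a norm on ℝ² with ‖(1,0)‖ = 1 = ‖(0,1)‖, and let Φ be the spectral measure of μ with respect to ‖·‖. Then Φ satisfies the moment constraints ∫_{[0,π/2]} sinθ/‖(sinθ,cosθ)‖ Φ(dθ) = 1 = ∫_{[0,π/2]} cosθ/‖(sinθ,cosθ)‖ Φ(dθ). -/

import Mathlib

open MeasureTheory Set Real Filter Topology
open scoped ENNReal Pointwise

noncomputable section

/-- The cone `E = [0,∞)² \ {(0,0)}` as a subset of `ℝ²`. -/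
def Econe : Set (ℝ × ℝ) := (Ici 0 ×ˢ Ici 0) \ {((0 : ℝ), (0 : ℝ))}

/-- The angular coordinate `θ(z) = arctan (z₁ / z₂)`, with `θ(z) = π/2` when `z₂ = 0`. -/
def ang (z : ℝ × ℝ) : ℝ := if z.2 = 0 then π / 2 else Real.arctan (z.1 / z.2)

/-!
Writing `k = z₁ / ‖z‖`, which is invariant under positive scaling, the moment is
`∫_{‖z‖ ≥ 1} k dμ`. Homogeneity of degree `-1` says that, in the coordinates `(1 / ‖z‖, k z)`,
`μ` is the product of Lebesgue measure on `(0, ∞)` with the law `Φₖ` of `k` under `μ` restricted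
to `{‖z‖ ≥ 1}`. Hence `∫ t dΦₖ(t) = (Leb ⊗ Φₖ){u ≤ t} = μ{1 / ‖z‖ ≤ k z} = μ{z₁ ≥ 1} = 1`.
-/

theorem volume_Ioi_prod_eq_of_apply_Iic_prod {Φ : Measure ℝ} [IsFiniteMeasure Φ]
    {ν : Measure (ℝ × ℝ)}
    (hν : ∀ u B, MeasurableSet B → ν (Iic u ×ˢ B) = ENNReal.ofReal u * Φ B) :
    (volume.restrict (Ioi 0)).prod Φ = ν := by
  have hIic : ∀ u : ℝ, volume.restrict (Ioi 0) (Iic u) = ENNReal.ofReal u := fun u => by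
    rw [Measure.restrict_apply measurableSet_Iic, Iic_inter_Ioi, Real.volume_Ioc, sub_zero]
  let spanning : (volume.restrict (Ioi (0 : ℝ))).FiniteSpanningSetsIn (range Iic) :=
    { set := fun n : ℕ => Iic (n : ℝ)
      set_mem := fun n => mem_range_self _
      finite := fun n => by simp [hIic]
      spanning := eq_univ_of_forall fun x => mem_iUnion.2 ⟨⌈x⌉₊, Nat.le_ceil x⟩ }
  refine Measure.prod_eq_generateFrom (borel_eq_generateFrom_Iic ℝ).symm
    MeasurableSpace.generateFrom_measurableSet isPiSystem_Iic
    MeasurableSpace.isPiSystem_measurableSet spanning Φ.toFiniteSpanningSetsIn ?_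
  rintro _ ⟨u, rfl⟩ B hB
  rw [hν u B hB, hIic]

theorem lintegral_ofReal_eq_volume_Ioi_prod_apply (Φ : Measure ℝ) [SFinite Φ] :
    ∫⁻ t, ENNReal.ofReal t ∂Φ = (volume.restrict (Ioi 0)).prod Φ {p | p.1 ≤ p.2} := by
  rw [Measure.prod_apply_symm (measurableSet_le measurable_fst measurable_snd)]
  refine lintegral_congr fun t => ?_
  rw [show (fun x => (x, t)) ⁻¹' {p : ℝ × ℝ | p.1 ≤ p.2} = Iic t from rfl,
    Measure.restrict_apply measurableSet_Iic, Iic_inter_Ioi, Real.volume_Ioc, sub_zero]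

section HomogeneousCone

variable {V : Type*} [AddCommGroup V] [Module ℝ V] {C : Set V} {N k : V → ℝ}

theorem smul_setOf_one_le_eq (hC : ∀ c > (0 : ℝ), ∀ z ∈ C, c • z ∈ C)
    (hN : ∀ c > (0 : ℝ), ∀ z, N (c • z) = c * N z) (hk : ∀ c > (0 : ℝ), ∀ z, k (c • z) = k z)
    (B : Set ℝ) {s : ℝ} (hs : 0 < s) :
    s • {z | z ∈ C ∧ 1 ≤ N z ∧ k z ∈ B} = {z | z ∈ C ∧ s ≤ N z ∧ k z ∈ B} := by
  ext z
  have hs' : 0 < s⁻¹ := inv_pos.2 hs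
  rw [mem_smul_set_iff_inv_smul_mem₀ hs.ne', mem_ofPred_eq, mem_ofPred_eq, hN _ hs', hk _ hs',
    le_inv_mul_iff₀ hs, mul_one]
  refine and_congr_left fun _ => ⟨fun h => ?_, hC _ hs' z⟩
  simpa [smul_inv_smul₀ hs.ne'] using hC s hs _ h

variable [MeasurableSpace V] {μ : Measure V}

theorem measure_setOf_le_eq_ofReal_inv_mul (hC : ∀ c > (0 : ℝ), ∀ z ∈ C, c • z ∈ C)
    (hCm : MeasurableSet C)
    (hμ : ∀ B ⊆ C, MeasurableSet B → ∀ c > (0 : ℝ), μ (c • B) = ENNReal.ofReal c⁻¹ * μ B)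
    (hNm : Measurable N) (hN : ∀ c > (0 : ℝ), ∀ z, N (c • z) = c * N z)
    (hkm : Measurable k) (hk : ∀ c > (0 : ℝ), ∀ z, k (c • z) = k z)
    {B : Set ℝ} (hB : MeasurableSet B) {s : ℝ} (hs : 0 < s) :
    μ {z | z ∈ C ∧ s ≤ N z ∧ k z ∈ B} =
      ENNReal.ofReal s⁻¹ * μ {z | z ∈ C ∧ 1 ≤ N z ∧ k z ∈ B} := by
  rw [← smul_setOf_one_le_eq hC hN hk B hs]
  exact hμ _ (fun z hz => hz.1) (hCm.inter ((measurableSet_le measurable_const hNm).inter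
    (hkm hB))) s hs

theorem setLIntegral_ofReal_eq_measure_setOf_one_le_mul
    (hC : ∀ c > (0 : ℝ), ∀ z ∈ C, c • z ∈ C) (hCm : MeasurableSet C)
    (hμ : ∀ B ⊆ C, MeasurableSet B → ∀ c > (0 : ℝ), μ (c • B) = ENNReal.ofReal c⁻¹ * μ B)
    (hNm : Measurable N) (hN : ∀ c > (0 : ℝ), ∀ z, N (c • z) = c * N z)
    (hNpos : ∀ z ∈ C, 0 < N z) (hfin : μ {z | z ∈ C ∧ 1 ≤ N z} ≠ ⊤)
    (hkm : Measurable k) (hk : ∀ c > (0 : ℝ), ∀ z, k (c • z) = k z) :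
    ∫⁻ z in {z | z ∈ C ∧ 1 ≤ N z}, ENNReal.ofReal (k z) ∂μ =
      μ {z | z ∈ C ∧ 1 ≤ N z * k z} := by
  set A := {z | z ∈ C ∧ 1 ≤ N z}
  have hAm : MeasurableSet A := hCm.inter (measurableSet_le measurable_const hNm)
  set Φ := (μ.restrict A).map k
  have hΦ : ∀ B, MeasurableSet B → Φ B = μ {z | z ∈ C ∧ 1 ≤ N z ∧ k z ∈ B} := fun B hB => by
    rw [Measure.map_apply hkm hB, Measure.restrict_apply (hkm hB)]
    congr 1
    ext z
    exact ⟨fun h => ⟨h.2.1, h.2.2, h.1⟩, fun h => ⟨h.2.2, h.1, h.2.1⟩⟩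
  have : IsFiniteMeasure Φ := ⟨by
    rw [Measure.map_apply hkm .univ, preimage_univ, Measure.restrict_apply_univ]
    exact hfin.lt_top⟩
  have hpair : Measurable fun z => ((N z)⁻¹, k z) := hNm.inv.prodMk hkm
  have hpolar : (volume.restrict (Ioi 0)).prod Φ = (μ.restrict C).map fun z => ((N z)⁻¹, k z) := by
    refine volume_Ioi_prod_eq_of_apply_Iic_prod fun u B hB => ?_
    rw [Measure.map_apply hpair (measurableSet_Iic.prod hB),
      Measure.restrict_apply (measurableSet_Iic.prod hB |>.preimage hpair)]
    rcases le_or_gt u 0 with hu | hu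
    · rw [ENNReal.ofReal_of_nonpos hu, zero_mul]
      refine measure_mono_null (fun z ⟨hz, hzC⟩ => ?_) measure_empty
      exact absurd (hz.1.trans hu) (inv_pos.2 (hNpos z hzC)).not_ge
    · have hscale := measure_setOf_le_eq_ofReal_inv_mul hC hCm hμ hNm hN hkm hk hB (inv_pos.2 hu)
      rw [inv_inv] at hscale
      rw [hΦ B hB, ← hscale]
      congr 1
      ext z
      refine ⟨fun ⟨⟨hu', hkB⟩, hzC⟩ => ⟨hzC, ?_, hkB⟩, fun ⟨hzC, hNz, hkB⟩ => ⟨⟨?_, hkB⟩, hzC⟩⟩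
      · exact (inv_le_comm₀ (hNpos z hzC) hu).1 hu'
      · exact (inv_le_comm₀ (hNpos z hzC) hu).2 hNz
  calc ∫⁻ z in A, ENNReal.ofReal (k z) ∂μ = ∫⁻ t, ENNReal.ofReal t ∂Φ :=
        (lintegral_map ENNReal.measurable_ofReal hkm).symm
    _ = (volume.restrict (Ioi 0)).prod Φ {p | p.1 ≤ p.2} :=
        lintegral_ofReal_eq_volume_Ioi_prod_apply Φ
    _ = μ {z | z ∈ C ∧ 1 ≤ N z * k z} := by
      rw [hpolar, Measure.map_apply hpair (measurableSet_le measurable_fst measurable_snd),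
        Measure.restrict_apply (hpair (measurableSet_le measurable_fst measurable_snd))]
      congr 1
      ext z
      exact ⟨fun ⟨h, hzC⟩ => ⟨hzC, (inv_le_iff_one_le_mul₀' (hNpos z hzC)).1 h⟩,
        fun ⟨hzC, h⟩ => ⟨(inv_le_iff_one_le_mul₀' (hNpos z hzC)).2 h, hzC⟩⟩

end HomogeneousCone

theorem Seminorm.continuous_of_finiteDimensional {E : Type*} [NormedAddCommGroup E]
    [NormedSpace ℝ E] [FiniteDimensional ℝ E] (p : Seminorm ℝ E) : Continuous p :=
  continuousOn_univ.1 (p.convexOn.continuousOn isOpen_univ)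

theorem Seminorm.apply_le_abs_fst_mul_add_abs_snd_mul (p : Seminorm ℝ (ℝ × ℝ)) (z : ℝ × ℝ) :
    p z ≤ |z.1| * p (1, 0) + |z.2| * p (0, 1) := by
  have hz : z = z.1 • ((1 : ℝ), (0 : ℝ)) + z.2 • ((0 : ℝ), (1 : ℝ)) := by ext <;> simp
  conv_lhs => rw [hz]
  refine (map_add_le_add p _ _).trans_eq ?_
  simp only [map_smul_eq_mul, Real.norm_eq_abs]

theorem measurableSet_Econe : MeasurableSet Econe :=
  (measurableSet_Ici.prod measurableSet_Ici).diff (measurableSet_singleton _)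

theorem smul_mem_Econe {c : ℝ} (hc : 0 < c) {z : ℝ × ℝ} (hz : z ∈ Econe) : c • z ∈ Econe :=
  ⟨⟨mul_nonneg hc.le hz.1.1, mul_nonneg hc.le hz.1.2⟩,
    fun h => hz.2 ((smul_eq_zero.1 (h : c • z = 0)).resolve_left hc.ne')⟩

theorem measurable_ang : Measurable ang :=
  Measurable.ite (measurable_snd (measurableSet_singleton 0)) measurable_const
    (Real.continuous_arctan.measurable.comp (measurable_fst.div measurable_snd))

theorem ang_mem_Icc {z : ℝ × ℝ} (h1 : 0 ≤ z.1) (h2 : 0 ≤ z.2) : ang z ∈ Icc 0 (π / 2) := by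
  unfold ang
  split_ifs
  · exact ⟨by positivity, le_rfl⟩
  · exact ⟨Real.arctan_nonneg.2 (div_nonneg h1 h2), (Real.arctan_lt_pi_div_two _).le⟩

theorem exists_pos_smul_eq_sin_cos_ang {z : ℝ × ℝ} (hz : z ∈ Econe) :
    ∃ c : ℝ, 0 < c ∧ c • z = (Real.sin (ang z), Real.cos (ang z)) := by
  obtain ⟨⟨h1, h2⟩, h0⟩ := hz
  unfold ang
  split_ifs with hz2
  · have hz1 : 0 < z.1 := h1.lt_of_ne' fun hz1 => h0 (Prod.ext hz1 hz2)
    refine ⟨z.1⁻¹, inv_pos.2 hz1, ?_⟩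
    ext <;> simp [hz2, hz1.ne']
  · have hz2 : 0 < z.2 := (Ne.symm hz2).lt_of_le h2
    -- `θ = arctan (z₁ / z₂)` gives `(sin θ, cos θ) = (cos θ / z₂) • z`
    refine ⟨Real.cos (Real.arctan (z.1 / z.2)) / z.2, div_pos (Real.cos_arctan_pos _) hz2, ?_⟩
    ext
    · simp only [Prod.smul_fst, smul_eq_mul, Real.sin_arctan, Real.cos_arctan]
      field_simp
    · simp [hz2.ne']

theorem setLIntegral_spectral_eq_measure (μ : Measure (ℝ × ℝ))
    (hhom : ∀ B : Set (ℝ × ℝ), B ⊆ Econe → MeasurableSet B → ∀ c > (0 : ℝ),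
      μ (c • B) = ENNReal.ofReal c⁻¹ * μ B)
    (N : Seminorm ℝ (ℝ × ℝ)) (hNpos : ∀ z ∈ Econe, 0 < N z)
    (hfin : μ {z | z ∈ Econe ∧ 1 ≤ N z} ≠ ⊤)
    (Φ : Measure ℝ)
    (hΦ : ∀ B : Set ℝ, MeasurableSet B → Φ B = μ {z | z ∈ Econe ∧ 1 ≤ N z ∧ ang z ∈ B})
    (f : ℝ × ℝ →L[ℝ] ℝ) :
    ∫⁻ θ in Icc 0 (π / 2), ENNReal.ofReal (f (Real.sin θ, Real.cos θ) /
      N (Real.sin θ, Real.cos θ)) ∂Φ = μ {z | z ∈ Econe ∧ 1 ≤ f z} := by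
  set A := {z | z ∈ Econe ∧ 1 ≤ N z}
  have hNm : Measurable N := N.continuous_of_finiteDimensional.measurable
  have hAm : MeasurableSet A := measurableSet_Econe.inter (measurableSet_le measurable_const hNm)
  have hN : ∀ c > (0 : ℝ), ∀ z, N (c • z) = c * N z := fun c hc z => by
    rw [map_smul_eq_mul, Real.norm_of_nonneg hc.le]
  set k := fun z => f z / N z
  have hkm : Measurable k := f.measurable.div hNm
  have hk : ∀ c > (0 : ℝ), ∀ z, k (c • z) = k z := fun c hc z => by
    simp only [k, map_smul, smul_eq_mul, hN c hc, mul_div_mul_left _ _ hc.ne']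
  have hΦA : Φ = (μ.restrict A).map ang := Measure.ext fun B hB => by
    rw [hΦ B hB, Measure.map_apply measurable_ang hB, Measure.restrict_apply (measurable_ang hB)]
    congr 1
    ext z
    exact ⟨fun h => ⟨h.2.2, h.1, h.2.1⟩, fun h => ⟨h.2.1, h.2.2, h.1⟩⟩
  have hA_ang : A ⊆ ang ⁻¹' Icc 0 (π / 2) := fun z hz => ang_mem_Icc hz.1.1.1 hz.1.1.2
  calc ∫⁻ θ in Icc 0 (π / 2), ENNReal.ofReal (k (Real.sin θ, Real.cos θ)) ∂Φ
      = ∫⁻ z in A, ENNReal.ofReal (k (Real.sin (ang z), Real.cos (ang z))) ∂μ := by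
        have hFm : Measurable fun θ => ENNReal.ofReal (k (Real.sin θ, Real.cos θ)) :=
          (hkm.comp (by fun_prop)).ennreal_ofReal
        rw [hΦA, setLIntegral_map measurableSet_Icc hFm measurable_ang,
          Measure.restrict_restrict (measurable_ang measurableSet_Icc),
          inter_eq_self_of_subset_right hA_ang]
    _ = ∫⁻ z in A, ENNReal.ofReal (k z) ∂μ := setLIntegral_congr_fun hAm fun z hz => by
        obtain ⟨c, hc, hcz⟩ := exists_pos_smul_eq_sin_cos_ang hz.1
        rw [← hcz, hk c hc]
    _ = μ {z | z ∈ Econe ∧ 1 ≤ N z * k z} :=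
        setLIntegral_ofReal_eq_measure_setOf_one_le_mul (fun c hc z hz => smul_mem_Econe hc hz)
          measurableSet_Econe hhom hNm hN hNpos hfin hkm hk
    _ = μ {z | z ∈ Econe ∧ 1 ≤ f z} := by
        congr 1
        ext z
        exact and_congr_right fun hz => by rw [mul_div_cancel₀ _ (hNpos z hz).ne']

theorem stmt3_general (μ : Measure (ℝ × ℝ))
    (hbf : ∀ ε > (0 : ℝ), μ {z | z ∈ Econe ∧ ε ≤ max z.1 z.2} < ⊤)
    (hhom : ∀ B : Set (ℝ × ℝ), B ⊆ Econe → MeasurableSet B → ∀ c > (0 : ℝ),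
      μ (c • B) = ENNReal.ofReal c⁻¹ * μ B)
    (hstd : ∀ z > (0 : ℝ),
      μ {w | w ∈ Econe ∧ z ≤ w.1} = ENNReal.ofReal (1 / z) ∧
      μ {w | w ∈ Econe ∧ z ≤ w.2} = ENNReal.ofReal (1 / z))
    (Nn : ℝ × ℝ → ℝ)
    (hN_add : ∀ z w, Nn (z + w) ≤ Nn z + Nn w)
    (hN_smul : ∀ (c : ℝ) (z), Nn (c • z) = |c| * Nn z)
    (hN_zero : ∀ z, Nn z = 0 ↔ z = 0)
    (hN10 : Nn (1, 0) = 1) (hN01 : Nn (0, 1) = 1)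
    (Φ : Measure ℝ)
    (hΦ : ∀ B : Set ℝ, MeasurableSet B →
      Φ B = μ {z | z ∈ Econe ∧ 1 ≤ Nn z ∧ ang z ∈ B}) :
    (∫⁻ θ in Icc 0 (π / 2),
        ENNReal.ofReal (Real.sin θ / Nn (Real.sin θ, Real.cos θ)) ∂Φ) = 1 ∧
    (∫⁻ θ in Icc 0 (π / 2),
        ENNReal.ofReal (Real.cos θ / Nn (Real.sin θ, Real.cos θ)) ∂Φ) = 1 := by
  let N : Seminorm ℝ (ℝ × ℝ) := .of Nn hN_add fun c z => by rw [hN_smul, Real.norm_eq_abs]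
  have hNpos : ∀ z ∈ Econe, 0 < N z := fun z hz =>
    (apply_nonneg N z).lt_of_ne' fun h => hz.2 ((hN_zero z).1 h)
  have hfin : μ {z | z ∈ Econe ∧ 1 ≤ N z} ≠ ⊤ := by
    refine ne_top_of_le_ne_top (hbf (1 / 2) (by norm_num)).ne
      (measure_mono fun z ⟨hz, hNz⟩ => ⟨hz, ?_⟩)
    have hle : Nn z ≤ |z.1| * Nn (1, 0) + |z.2| * Nn (0, 1) :=
      N.apply_le_abs_fst_mul_add_abs_snd_mul z
    rw [hN10, hN01, abs_of_nonneg hz.1.1, abs_of_nonneg hz.1.2] at hle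
    linarith [show 1 ≤ Nn z from hNz, le_max_left z.1 z.2, le_max_right z.1 z.2]
  have hmoment := setLIntegral_spectral_eq_measure μ hhom N hNpos hfin Φ hΦ
  exact ⟨(hmoment (.fst ℝ ℝ ℝ)).trans ((hstd 1 one_pos).1.trans (by norm_num)),
    (hmoment (.snd ℝ ℝ ℝ)).trans ((hstd 1 one_pos).2.trans (by norm_num))⟩

theorem stmt3 (μ : Measure (ℝ × ℝ)) (hμE : μ Econeᶜ = 0)
    (hbf : ∀ ε > (0 : ℝ), μ {z | z ∈ Econe ∧ ε ≤ max z.1 z.2} < ⊤)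
    (hhom : ∀ B : Set (ℝ × ℝ), B ⊆ Econe → MeasurableSet B → ∀ c > (0 : ℝ),
      μ (c • B) = ENNReal.ofReal c⁻¹ * μ B)
    (hstd : ∀ z > (0 : ℝ),
      μ {w | w ∈ Econe ∧ z ≤ w.1} = ENNReal.ofReal (1 / z) ∧
      μ {w | w ∈ Econe ∧ z ≤ w.2} = ENNReal.ofReal (1 / z))
    (Nn : ℝ × ℝ → ℝ)
    (hN_add : ∀ z w, Nn (z + w) ≤ Nn z + Nn w)
    (hN_smul : ∀ (c : ℝ) (z), Nn (c • z) = |c| * Nn z)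
    (hN_zero : ∀ z, Nn z = 0 ↔ z = 0)
    (hN10 : Nn (1, 0) = 1) (hN01 : Nn (0, 1) = 1)
    (Φ : Measure ℝ)
    (hΦ : ∀ B : Set ℝ, MeasurableSet B →
      Φ B = μ {z | z ∈ Econe ∧ 1 ≤ Nn z ∧ ang z ∈ B}) :
    (∫⁻ θ in Icc 0 (π / 2),
        ENNReal.ofReal (Real.sin θ / Nn (Real.sin θ, Real.cos θ)) ∂Φ) = 1 ∧
    (∫⁻ θ in Icc 0 (π / 2),
        ENNReal.ofReal (Real.cos θ / Nn (Real.sin θ, Real.cos θ)) ∂Φ) = 1 :=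
  stmt3_general μ hbf hhom hstd Nn hN_add hN_smul hN_zero hN10 hN01 Φ hΦ
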